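/- Let (X, d) be a compact quasihypermetric space. If μ_n is a d-invariant sequence in M₁(X) with value c (a Cauchy sequence in the seminorm with d_{μ_n} → c·1 uniformly), then M(X) = c < ∞ and μ_n is a maximal sequence, i.e., I(μ_n) → M(X). -/

import Mathlib

/-!
Write `I(ν, ρ) = ∫ d_ρ dν`. Uniform convergence `d_{μ_n} → c` gives `I(ν, μ_n) → c` for every
`ν ∈ M₁(X)`, and expanding `0 ≥ I(ν - μ_n) = I(ν) + I(μ_n) - 2 I(ν, μ_n)` bounds `I(ν)` by
`2c - lim I(μ_n)`. So everything reduces to `I(μ_n) → c`. The Cauchy condition says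
`I(μ_m) + I(μ_n) - 2 I(μ_m, μ_n) → 0`, hence `I(μ_m) + I(μ_n) ≈ 2c` whenever `m` is large and
`n ≫ m`; comparing the three sums for indices `m`, `n ≫ m`, `k ≫ n` gives `I(μ_m) ≈ c`.
-/

open MeasureTheory

/-- Integral of a function against a finite signed Borel measure, via Jordan decomposition. -/
noncomputable def sInt {X : Type*} [MeasurableSpace X] (μ : SignedMeasure X) (f : X → ℝ) : ℝ :=
  (∫ x, f x ∂μ.toJordanDecomposition.posPart) - ∫ x, f x ∂μ.toJordanDecomposition.negPart

/-- Energy `I(μ, ν) = ∫∫ d(x,y) dμ(x) dν(y)` with respect to a kernel `d`. -/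
noncomputable def en {X : Type*} [MeasurableSpace X] (d : X → X → ℝ)
    (μ ν : SignedMeasure X) : ℝ :=
  sInt μ (fun x => sInt ν (fun y => d x y))

/-- The potential `d_μ(x) = ∫ d(x,y) dμ(y)`. -/
noncomputable def dPot {X : Type*} [MeasurableSpace X] (d : X → X → ℝ)
    (μ : SignedMeasure X) (x : X) : ℝ :=
  sInt μ (fun y => d x y)

/-- The set of energies `I(μ)` of signed Borel measures of total mass one. -/
noncomputable def MSet (X : Type*) [MetricSpace X] [MeasurableSpace X] : Set ℝ :=
  {r | ∃ μ : SignedMeasure X, μ Set.univ = (1 : ℝ) ∧ en (fun x y => dist x y) μ μ = r}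

open Filter Topology

lemma tendsto_of_forall_abs_add_sub_two_mul_lt {a : ℕ → ℝ} {b : ℕ → ℕ → ℝ} {c : ℝ}
    (hab : ∀ ε > 0, ∃ N, ∀ m ≥ N, ∀ n ≥ N, |a m + a n - 2 * b m n| < ε)
    (hb : ∀ m, Tendsto (b m) atTop (𝓝 c)) : Tendsto a atTop (𝓝 c) := by
  rw [Metric.tendsto_atTop]
  intro ε hε
  obtain ⟨N, hN⟩ := hab (ε / 5) (by positivity)
  have near : ∀ m ≥ N, ∀ᶠ n in atTop, N ≤ n ∧ |a m + a n - 2 * c| < 3 * (ε / 5) := by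
    intro m hm
    filter_upwards [eventually_ge_atTop N,
      (hb m).eventually (Metric.ball_mem_nhds c (by positivity : 0 < ε / 5))] with n hn hbn
    have hmn := hN m hm n hn
    rw [Real.dist_eq] at hbn
    rw [abs_lt] at hmn hbn ⊢
    exact ⟨hn, by linarith, by linarith⟩
  refine ⟨N, fun m hm => ?_⟩
  obtain ⟨n, hn, hmn⟩ := (near m hm).exists
  obtain ⟨k, ⟨-, hmk⟩, -, hnk⟩ := ((near m hm).and (near n hn)).exists
  rw [Real.dist_eq]
  rw [abs_lt] at hmn hmk hnk ⊢
  -- `2 (a m - c) = (a m + a n - 2c) + (a m + a k - 2c) - (a n + a k - 2c)`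
  constructor <;> linarith

lemma tendsto_integral_of_tendstoUniformly {α ι E : Type*} [MeasurableSpace α]
    [NormedAddCommGroup E] [NormedSpace ℝ E] {ρ : Measure α} [IsFiniteMeasure ρ] {l : Filter ι}
    {F : ι → α → E} {f : α → E} (hF : ∀ i, Integrable (F i) ρ) (hf : Integrable f ρ)
    (h : TendstoUniformly F f l) : Tendsto (fun i => ∫ x, F i x ∂ρ) l (𝓝 (∫ x, f x ∂ρ)) := by
  rw [Metric.tendsto_nhds]
  intro ε hε
  have hδ : 0 < ε / (ρ.real Set.univ + 1) := by positivity
  filter_upwards [Metric.tendstoUniformly_iff.mp h _ hδ] with i hi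
  rw [dist_eq_norm, ← integral_sub (hF i) hf]
  calc ‖∫ x, F i x - f x ∂ρ‖ ≤ ε / (ρ.real Set.univ + 1) * ρ.real Set.univ :=
        norm_integral_le_of_norm_le_const (C := ε / (ρ.real Set.univ + 1)) <|
          Eventually.of_forall fun x => by rw [← dist_eq_norm, dist_comm]; exact (hi x).le
    _ < ε := by
        rw [div_mul_eq_mul_div, div_lt_iff₀ (by positivity)]
        nlinarith [measureReal_nonneg (μ := ρ) (s := Set.univ)]

lemma sInt_const {X : Type*} [MeasurableSpace X] (μ : SignedMeasure X) (r : ℝ) :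
    sInt μ (fun _ => r) = r * μ Set.univ := by
  conv_rhs => rw [← μ.toSignedMeasure_toJordanDecomposition]
  rw [JordanDecomposition.toSignedMeasure, sub_apply,
    Measure.toSignedMeasure_apply_measurable MeasurableSet.univ,
    Measure.toSignedMeasure_apply_measurable MeasurableSet.univ]
  simp only [sInt, integral_const, smul_eq_mul]
  ring

section SignedIntegral

variable {X : Type*} [TopologicalSpace X] [CompactSpace X] [MeasurableSpace X]
  [OpensMeasurableSpace X]

lemma Continuous.integrable_of_compactSpace {E : Type*} [NormedAddCommGroup E] {f : X → E}
    (hf : Continuous f) (ρ : Measure X) [IsFiniteMeasure ρ] : Integrable f ρ :=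
  hf.integrable_of_hasCompactSupport (HasCompactSupport.of_compactSpace f)

lemma sInt_eq_integral_sub_integral {μ : SignedMeasure X} {P N : Measure X} [IsFiniteMeasure P]
    [IsFiniteMeasure N] (h : μ = P.toSignedMeasure - N.toSignedMeasure) {f : X → ℝ}
    (hf : Continuous f) : sInt μ f = (∫ x, f x ∂P) - ∫ x, f x ∂N := by
  set J := μ.toJordanDecomposition
  have hJ : J.posPart + N = J.negPart + P := by
    rw [← Measure.toSignedMeasure_eq_toSignedMeasure_iff, Measure.toSignedMeasure_add,
      Measure.toSignedMeasure_add, add_comm J.negPart.toSignedMeasure,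
      ← sub_eq_sub_iff_add_eq_add, ← h]
    exact μ.toSignedMeasure_toJordanDecomposition
  have h_int := congrArg (fun ρ => ∫ x, f x ∂ρ) hJ
  simp only [integral_add_measure (hf.integrable_of_compactSpace _)
    (hf.integrable_of_compactSpace _)] at h_int
  unfold sInt
  linarith

lemma sInt_sub_measure (μ ν : SignedMeasure X) {f : X → ℝ} (hf : Continuous f) :
    sInt (μ - ν) f = sInt μ f - sInt ν f := by
  set Jμ := μ.toJordanDecomposition
  set Jν := ν.toJordanDecomposition
  have h : μ - ν = (Jμ.posPart + Jν.negPart).toSignedMeasure -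
      (Jμ.negPart + Jν.posPart).toSignedMeasure := by
    rw [Measure.toSignedMeasure_add, Measure.toSignedMeasure_add]
    conv_lhs => rw [← μ.toSignedMeasure_toJordanDecomposition,
      ← ν.toSignedMeasure_toJordanDecomposition]
    rw [JordanDecomposition.toSignedMeasure, JordanDecomposition.toSignedMeasure]
    abel
  rw [sInt_eq_integral_sub_integral h hf,
    integral_add_measure (hf.integrable_of_compactSpace _) (hf.integrable_of_compactSpace _),
    integral_add_measure (hf.integrable_of_compactSpace _) (hf.integrable_of_compactSpace _)]
  unfold sInt
  ring

lemma sInt_sub {f g : X → ℝ} (μ : SignedMeasure X) (hf : Continuous f) (hg : Continuous g) :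
    sInt μ (fun x => f x - g x) = sInt μ f - sInt μ g := by
  unfold sInt
  rw [integral_sub (hf.integrable_of_compactSpace _) (hg.integrable_of_compactSpace _),
    integral_sub (hf.integrable_of_compactSpace _) (hg.integrable_of_compactSpace _)]
  ring

lemma tendsto_sInt_of_tendstoUniformly {ι : Type*} {l : Filter ι} {F : ι → X → ℝ} {f : X → ℝ}
    (μ : SignedMeasure X) (hF : ∀ i, Continuous (F i)) (hf : Continuous f)
    (h : TendstoUniformly F f l) : Tendsto (fun i => sInt μ (F i)) l (𝓝 (sInt μ f)) :=
  (tendsto_integral_of_tendstoUniformly (fun i => (hF i).integrable_of_compactSpace _)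
      (hf.integrable_of_compactSpace _) h).sub
    (tendsto_integral_of_tendstoUniformly (fun i => (hF i).integrable_of_compactSpace _)
      (hf.integrable_of_compactSpace _) h)

end SignedIntegral

section Kernel

variable {X : Type*} [MetricSpace X] [CompactSpace X] [MeasurableSpace X] [BorelSpace X]
  {d : X → X → ℝ}

lemma continuous_integral_kernel (hd : Continuous (Function.uncurry d)) (ρ : Measure X)
    [IsFiniteMeasure ρ] : Continuous fun x => ∫ y, d x y ∂ρ := by
  simpa only [Measure.restrict_univ] using
    continuous_parametric_integral_of_continuous (μ := ρ) hd isCompact_univ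

lemma continuous_dPot (hd : Continuous (Function.uncurry d)) (μ : SignedMeasure X) :
    Continuous (dPot d μ) :=
  (continuous_integral_kernel hd _).sub (continuous_integral_kernel hd _)

lemma en_sub_left (hd : Continuous (Function.uncurry d)) (μ ν τ : SignedMeasure X) :
    en d (μ - ν) τ = en d μ τ - en d ν τ :=
  sInt_sub_measure μ ν (continuous_dPot hd τ)

lemma en_sub_right (hd : Continuous (Function.uncurry d)) (τ μ ν : SignedMeasure X) :
    en d τ (μ - ν) = en d τ μ - en d τ ν := by
  have hdx : ∀ x, Continuous (d x) := fun x => hd.comp (Continuous.prodMk_right x)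
  have h_pot : dPot d (μ - ν) = fun x => dPot d μ x - dPot d ν x :=
    funext fun x => sInt_sub_measure μ ν (hdx x)
  change sInt τ (dPot d (μ - ν)) = sInt τ (dPot d μ) - sInt τ (dPot d ν)
  rw [h_pot, sInt_sub τ (continuous_dPot hd μ) (continuous_dPot hd ν)]

lemma en_comm (hd : Continuous (Function.uncurry d)) (hsymm : ∀ x y, d x y = d y x)
    (μ ν : SignedMeasure X) : en d μ ν = en d ν μ := by
  have h_swap : ∀ (P Q : Measure X) [IsFiniteMeasure P] [IsFiniteMeasure Q],
      ∫ x, ∫ y, d x y ∂Q ∂P = ∫ x, ∫ y, d x y ∂P ∂Q := by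
    intro P Q _ _
    rw [integral_integral_swap (hd.integrable_of_compactSpace _)]
    simp_rw [hsymm]
  have h_split : ∀ (ρ P N : Measure X) [IsFiniteMeasure ρ] [IsFiniteMeasure P]
      [IsFiniteMeasure N], ∫ x, ((∫ y, d x y ∂P) - ∫ y, d x y ∂N) ∂ρ =
        (∫ x, ∫ y, d x y ∂P ∂ρ) - ∫ x, ∫ y, d x y ∂N ∂ρ := by
    intro ρ P N _ _ _
    exact integral_sub ((continuous_integral_kernel hd P).integrable_of_compactSpace _)
      ((continuous_integral_kernel hd N).integrable_of_compactSpace _)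
  simp only [en, sInt, h_split]
  rw [h_swap μ.toJordanDecomposition.posPart, h_swap μ.toJordanDecomposition.negPart,
    h_swap μ.toJordanDecomposition.posPart, h_swap μ.toJordanDecomposition.negPart]
  ring

lemma en_sub_sub (hd : Continuous (Function.uncurry d)) (hsymm : ∀ x y, d x y = d y x)
    (μ ν : SignedMeasure X) :
    en d (μ - ν) (μ - ν) = en d μ μ + en d ν ν - 2 * en d μ ν := by
  rw [en_sub_left hd, en_sub_right hd, en_sub_right hd, en_comm hd hsymm ν μ]
  ring

lemma tendsto_en_of_tendstoUniformly (hd : Continuous (Function.uncurry d))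
    {μ : ℕ → SignedMeasure X} {f : X → ℝ} (hf : Continuous f)
    (h : TendstoUniformly (fun n => dPot d (μ n)) f atTop) (ν : SignedMeasure X) :
    Tendsto (fun n => en d ν (μ n)) atTop (𝓝 (sInt ν f)) :=
  tendsto_sInt_of_tendstoUniformly ν (fun n => continuous_dPot hd (μ n)) hf h

end Kernel

/-- If `μ_n` is a `d`-invariant sequence in `M₁(X)` with value `c` (Cauchy in the
seminorm, with `d_{μ_n} → c·1` uniformly), then `M(X) = c < ∞` and `μ_n` is a maximal
sequence, i.e. `I(μ_n) → M(X) = c`. -/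
theorem stmt13 {X : Type*} [MetricSpace X] [CompactSpace X] [MeasurableSpace X] [BorelSpace X]
    (hq : ∀ ν : SignedMeasure X, ν Set.univ = (0 : ℝ) → en (fun x y => dist x y) ν ν ≤ 0)
    (μ : ℕ → SignedMeasure X) (hμ : ∀ n, (μ n) Set.univ = (1 : ℝ)) (c : ℝ)
    (hCauchy : ∀ ε > (0 : ℝ), ∃ N : ℕ, ∀ p ≥ N, ∀ q ≥ N,
      Real.sqrt (-(en (fun x y => dist x y) (μ p - μ q) (μ p - μ q))) < ε)
    (hd : TendstoUniformly (fun n x => dPot (fun x y => dist x y) (μ n) x)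
      (fun _ => c) Filter.atTop) :
    IsLUB (MSet X) c ∧
      Filter.Tendsto (fun n => en (fun x y => dist x y) (μ n) (μ n))
        Filter.atTop (nhds c) := by
  have h_expand := en_sub_sub (d := fun x y : X => dist x y) continuous_dist dist_comm
  have h_pair : ∀ ν : SignedMeasure X, ν Set.univ = 1 →
      Tendsto (fun n => en (fun x y => dist x y) ν (μ n)) atTop (𝓝 c) := fun ν hν => by
    simpa only [sInt_const, hν, mul_one] using
      tendsto_en_of_tendstoUniformly continuous_dist continuous_const hd ν
  have h_diff : ∀ ν : SignedMeasure X, ν Set.univ = 1 →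
      ∀ n, en (fun x y => dist x y) (ν - μ n) (ν - μ n) ≤ 0 := fun ν hν n =>
    hq _ (by rw [sub_apply, hν, hμ n, sub_self])
  have h_lim : Tendsto (fun n => en (fun x y => dist x y) (μ n) (μ n)) atTop (𝓝 c) := by
    refine tendsto_of_forall_abs_add_sub_two_mul_lt (fun ε hε => ?_) fun m => h_pair _ (hμ m)
    obtain ⟨N, hN⟩ := hCauchy (√ε) (by positivity)
    refine ⟨N, fun m hm n hn => ?_⟩
    have h_nonpos := h_diff _ (hμ m) n
    rw [← h_expand, abs_of_nonpos h_nonpos, ← Real.sqrt_lt_sqrt_iff (by linarith)]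
    exact hN m hm n hn
  refine ⟨⟨?_, fun b hb => le_of_tendsto' h_lim fun n => hb ⟨μ n, hμ n, rfl⟩⟩, h_lim⟩
  rintro _ ⟨ν, hν, rfl⟩
  have h_bound : en (fun x y => dist x y) ν ν ≤ 2 * c - c :=
    ge_of_tendsto' (((h_pair ν hν).const_mul 2).sub h_lim) fun n => by
      linarith [h_diff ν hν n, h_expand ν (μ n)]
  linarith
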